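/- For every positive integers m, n, k there is a bijection between the set of k-colourings of nK_m and the set of (n,m)-labelled Eulerian digraphs on k vertices; consequently the total number of colourings of nK_m equals the total number of (n,m)-labelled Eulerian digraphs (counted up to the appropriate isomorphism of labelled structures). -/

import Mathlib

open Finset

/-- The disjoint union of `n` copies of the complete graph `K_m`, on vertex set `Fin n × Fin m`. -/
def cliqueUnion (n m : ℕ) : SimpleGraph (Fin n × Fin m) where
  Adj x y := x.1 = y.1 ∧ x.2 ≠ y.2
  symm := ⟨fun _ _ h => ⟨h.1.symm, h.2.symm⟩⟩
  loopless := ⟨fun _ h => h.2 rfl⟩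

/-- A finpartition of the vertex set is a colouring when every part is a stable set. -/
def IsColouring {V : Type*} [Fintype V] [DecidableEq V] (G : SimpleGraph V)
    (P : Finpartition (univ : Finset V)) : Prop :=
  ∀ p ∈ P.parts, ∀ x ∈ p, ∀ y ∈ p, ¬ G.Adj x y

/-- The number of `k`-colourings of `G` (partitions into exactly `k` nonempty stable sets). -/
noncomputable def numColourings {V : Type*} [Fintype V] [DecidableEq V] (G : SimpleGraph V) (k : ℕ) : ℕ :=
  Nat.card {P : Finpartition (univ : Finset V) // P.parts.card = k ∧ IsColouring G P}

/-- The total number of colourings of `G`. -/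
noncomputable def totalColourings {V : Type*} [Fintype V] [DecidableEq V] (G : SimpleGraph V) : ℕ :=
  Nat.card {P : Finpartition (univ : Finset V) // IsColouring G P}

/-- A representative of an `(n,m)`-labelled Eulerian digraph on `k` vertices: the map sending
the `j`-th edge `e_{i,j}` of the `i`-th directed `m`-cycle to its starting vertex.  (The edge
`e_{i,j}` ends at the start of `e_{i,j+1}`, indices mod `m`; the in-degree/out-degree condition
is automatic.)  Every vertex is used, and each `m`-cycle visits `m` distinct vertices. -/
def LEDRep (n m k : ℕ) :=
  {s : Fin n × Fin m → Fin k // Function.Surjective s ∧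
    ∀ i : Fin n, Function.Injective fun j : Fin m => s (i, j)}

/-- Two representatives give the same labelled digraph when they differ by a relabelling of
the `k` vertices. -/
def ledSetoid (n m k : ℕ) : Setoid (LEDRep n m k) where
  r s t := ∃ π : Equiv.Perm (Fin k), ∀ x, π (s.1 x) = t.1 x
  iseqv := by
    refine ⟨fun s => ⟨Equiv.refl _, fun _ => rfl⟩, ?_, ?_⟩
    · rintro s t ⟨π, h⟩
      exact ⟨π.symm, fun x => by rw [← h x, Equiv.symm_apply_apply]⟩
    · rintro s t u ⟨π, h⟩ ⟨σ, h'⟩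
      exact ⟨π.trans σ, fun x => by rw [Equiv.trans_apply, h x, h' x]⟩

/-- `(n,m)`-labelled Eulerian digraphs on `k` vertices, up to isomorphism of labelled
structures. -/
def LED (n m k : ℕ) := Quotient (ledSetoid n m k)

/-!
Send a labelled digraph, given by the start vertex `s (i, j)` of each edge `e_{i,j}`, to the
partition of `Fin n × Fin m` into the fibres of `s`. A fibre is stable in `nK_m` exactly when no
`m`-cycle passes twice through the same vertex, and two surjections onto `Fin k` have the same
fibres exactly when they differ by a permutation of `Fin k`, i.e. a relabelling of the vertices.
-/

open Function

theorem exists_equiv_apply_eq_of_fibers_eq {α β γ : Type*} {f : α → β} {g : α → γ}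
    (hf : Surjective f) (hg : Surjective g) (h : ∀ a b, f a = f b ↔ g a = g b) :
    ∃ π : β ≃ γ, ∀ a, π (f a) = g a := by
  have hcomp : ∀ a, g (surjInv hf (f a)) = g a := fun a => (h _ _).1 (surjInv_eq hf _)
  refine ⟨Equiv.ofBijective (g ∘ surjInv hf) ⟨fun c d hcd => ?_, fun c => ?_⟩, hcomp⟩
  · rw [← surjInv_eq hf c, ← surjInv_eq hf d]
    exact (h _ _).2 hcd
  · obtain ⟨a, rfl⟩ := hg c
    exact ⟨f a, hcomp a⟩

namespace Finpartition

theorem ext_part {α : Type*} [DecidableEq α] {s : Finset α} {P Q : Finpartition s}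
    (h : ∀ a, P.part a = Q.part a) : P = Q := by
  suffices key : ∀ {P Q : Finpartition s}, (∀ a, P.part a = Q.part a) →
      ∀ t ∈ P.parts, t ∈ Q.parts by
    ext t
    exact ⟨key h t, key (fun a => (h a).symm) t⟩
  intro P Q h t ht
  obtain ⟨a, ha⟩ := P.nonempty_of_mem_parts ht
  rw [← P.part_eq_of_mem ht ha, h]
  exact Q.part_mem.2 (P.le ht ha)

end Finpartition

section FiberPartition

variable {α β γ : Type*} [Fintype α] [DecidableEq α] [DecidableEq β] [DecidableEq γ]

def fiberPartition (f : α → β) : Finpartition (univ : Finset α) :=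
  Finpartition.ofSetoid (Setoid.ker f)

theorem mem_part_fiberPartition {f : α → β} {a b : α} :
    b ∈ (fiberPartition f).part a ↔ f a = f b :=
  Finpartition.mem_part_ofSetoid_iff_rel

theorem fiberPartition_eq_iff {f : α → β} {g : α → γ} :
    fiberPartition f = fiberPartition g ↔ ∀ a b, f a = f b ↔ g a = g b := by
  refine ⟨fun h a b => ?_, fun h => Finpartition.ext_part fun a => ?_⟩
  · rw [← mem_part_fiberPartition, h, mem_part_fiberPartition]
  · ext b
    rw [mem_part_fiberPartition, mem_part_fiberPartition, h]

theorem card_parts_fiberPartition [Fintype β] {f : α → β} (hf : Surjective f) :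
    #(fiberPartition f).parts = Fintype.card β := by
  have hparts : (fiberPartition f).parts = univ.image fun c => ({b | c = f b} : Finset α) := by
    rw [← image_univ_of_surjective hf, image_image]
    rfl
  rw [hparts, card_image_of_injective _ fun c d hcd => ?_, card_univ]
  obtain ⟨a, rfl⟩ := hf c
  have ha : a ∈ ({b | f a = f b} : Finset α) := by simp
  rw [hcd] at ha
  exact (mem_filter.1 ha).2.symm

theorem isColouring_fiberPartition_iff (G : SimpleGraph α) (f : α → β) :
    IsColouring G (fiberPartition f) ↔ ∀ x y, G.Adj x y → f x ≠ f y := by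
  refine ⟨fun hcol x y hxy hfxy => ?_, fun hproper p hp x hx y hy => ?_⟩
  · exact hcol _ ((fiberPartition f).part_mem.2 (mem_univ x)) x
      (mem_part_fiberPartition.2 rfl) y (mem_part_fiberPartition.2 hfxy) hxy
  · rw [← (fiberPartition f).part_eq_of_mem hp hx, mem_part_fiberPartition] at hy
    exact fun hxy => hproper x y hxy hy

theorem exists_fiberPartition_eq (P : Finpartition (univ : Finset α)) (e : P.parts ≃ β) :
    ∃ f : α → β, Surjective f ∧ fiberPartition f = P := by
  set f : α → β := fun a => e ⟨P.part a, P.part_mem.2 (mem_univ a)⟩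
  refine ⟨f, fun c => ?_, Finpartition.ext_part fun a => ?_⟩
  · obtain ⟨a, ha⟩ := P.nonempty_of_mem_parts (e.symm c).2
    exact ⟨a, e.eq_symm_apply.1 (Subtype.ext (P.part_eq_of_mem (e.symm c).2 ha))⟩
  · ext b
    rw [mem_part_fiberPartition, P.mem_part_iff_part_eq_part (mem_univ b) (mem_univ a),
      e.injective.eq_iff, Subtype.mk.injEq, eq_comm]

end FiberPartition

section Counting

variable {V : Type*} [Fintype V] [DecidableEq V]

abbrev KColouring (G : SimpleGraph V) (k : ℕ) :=
  {P : Finpartition (univ : Finset V) // #P.parts = k ∧ IsColouring G P}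

theorem totalColourings_eq_sum_numColourings [Nonempty V] (G : SimpleGraph V) :
    totalColourings G = ∑ k ∈ Icc 1 (Fintype.card V), numColourings G k := by
  classical
  have hcard : ∀ P : Finpartition (univ : Finset V), #P.parts ∈ Icc 1 (Fintype.card V) :=
    fun P => mem_Icc.2 ⟨(P.parts_nonempty univ_nonempty.ne_empty).card_pos,
      P.card_parts_le_card.trans_eq (card_univ)⟩
  rw [totalColourings, Nat.card_eq_fintype_card, ← card_univ,
    card_eq_sum_card_fiberwise fun P _ => hcard P.1]
  refine sum_congr rfl fun k _ => ?_
  rw [← Fintype.card_subtype, numColourings, Nat.card_eq_fintype_card]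
  exact Fintype.card_congr ((Equiv.subtypeSubtypeEquivSubtypeInter (IsColouring G)
    (fun P => #P.parts = k)).trans (Equiv.subtypeEquivRight fun P => and_comm))

end Counting

section LabelledEulerianDigraphs

variable {n m k : ℕ}

theorem cliqueUnion_proper_iff (s : Fin n × Fin m → Fin k) :
    (∀ x y, (cliqueUnion n m).Adj x y → s x ≠ s y) ↔
      ∀ i, Injective fun j => s (i, j) := by
  refine ⟨fun hproper i j j' hs => ?_, ?_⟩
  · by_contra hne
    exact hproper (i, j) (i, j') ⟨rfl, hne⟩ hs
  · rintro hinj ⟨i, j⟩ ⟨i', j'⟩ ⟨rfl, hne⟩ hs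
    exact hne (hinj i hs)

def LEDRep.toColouring (s : LEDRep n m k) : KColouring (cliqueUnion n m) k :=
  ⟨fiberPartition s.1, card_parts_fiberPartition s.2.1 |>.trans (Fintype.card_fin k),
    (isColouring_fiberPartition_iff _ _).2 ((cliqueUnion_proper_iff s.1).2 s.2.2)⟩

def LED.toColouring : LED n m k → KColouring (cliqueUnion n m) k :=
  Quotient.lift LEDRep.toColouring fun s t ⟨π, hπ⟩ => Subtype.ext <|
    fiberPartition_eq_iff.2 fun a b => by rw [← hπ a, ← hπ b, π.injective.eq_iff]

theorem LED.toColouring_injective : Injective (LED.toColouring (n := n) (m := m) (k := k)) :=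
  Quotient.ind₂ fun s t h => Quotient.sound <|
    exists_equiv_apply_eq_of_fibers_eq s.2.1 t.2.1
      (fiberPartition_eq_iff.1 (congrArg Subtype.val h))

theorem LED.toColouring_surjective : Surjective (LED.toColouring (n := n) (m := m) (k := k)) := by
  rintro ⟨P, hcard, hcol⟩
  obtain ⟨s, hs, rfl⟩ := exists_fiberPartition_eq P (P.parts.equivFinOfCardEq hcard)
  have hinj := (cliqueUnion_proper_iff s).1 ((isColouring_fiberPartition_iff _ s).1 hcol)
  exact ⟨Quotient.mk _ ⟨s, hs, hinj⟩, rfl⟩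

noncomputable def LED.equivColouring (n m k : ℕ) : LED n m k ≃ KColouring (cliqueUnion n m) k :=
  Equiv.ofBijective LED.toColouring ⟨LED.toColouring_injective, LED.toColouring_surjective⟩

end LabelledEulerianDigraphs

theorem colourings_equiv_labelled_eulerian_digraphs (m n : ℕ) (hm : 1 ≤ m) (hn : 1 ≤ n) :
    (∀ k, 1 ≤ k →
      Nonempty ({P : Finpartition (univ : Finset (Fin n × Fin m)) //
          P.parts.card = k ∧ IsColouring (cliqueUnion n m) P} ≃ LED n m k)) ∧
    totalColourings (cliqueUnion n m) = ∑ k ∈ Finset.Icc 1 (n * m), Nat.card (LED n m k) := by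
  have : Nonempty (Fin n × Fin m) := ⟨(⟨0, hn⟩, ⟨0, hm⟩)⟩
  refine ⟨fun k _ => ⟨(LED.equivColouring n m k).symm⟩, ?_⟩
  rw [totalColourings_eq_sum_numColourings, Fintype.card_prod, Fintype.card_fin, Fintype.card_fin]
  exact sum_congr rfl fun k _ => Nat.card_congr (LED.equivColouring n m k).symm
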